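/- If R_c ∈ (1.42, 1.43) and x_c > 0 satisfy f_{R_c}(x_c) = 0 and f'_{R_c}(x_c) = 0, then f_{R_c}(x) > 0 for every x ∈ [0, ∞) with x ≠ x_c; in particular x_c is the unique nonnegative root of f_{R_c} and the third real root of the cubic f_{R_c} is negative. -/

import Mathlib

/-- The cubic whose positive roots give the nontrivial equilibria of the
vegetation–water system (ρ = 1, K = 10, β = 3, x₀ = 1, α = 1, λ = 0.12). -/
noncomputable def fR (R x : ℝ) : ℝ :=
  0.12 * x ^ 3 + 1.12 * x ^ 2 + (4.6 - 10 * R) * x + (30 - 10 * R)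

/-! At a double root `r`, the Taylor expansion of a cubic `a x³ + b x² + c x + d` leaves only
`(x - r)² (a (x + 2r) + b)`. For `f_R` this is `0.12 (x - x_c)² (x + 2 x_c + 28/3)`, positive
for `x ≥ 0`, `x ≠ x_c` as soon as `x_c ≥ 0`. -/

theorem cubic_eq_sq_mul_of_double_root {K : Type*} [CommRing K] {a b c d r : K}
    (hroot : a * r ^ 3 + b * r ^ 2 + c * r + d = 0)
    (hderiv : 3 * a * r ^ 2 + 2 * b * r + c = 0) (x : K) :
    a * x ^ 3 + b * x ^ 2 + c * x + d = (x - r) ^ 2 * (a * (x + 2 * r) + b) := by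
  linear_combination hroot + (x - r) * hderiv

theorem hasDerivAt_fR (R x : ℝ) :
    HasDerivAt (fR R) (3 * 0.12 * x ^ 2 + 2 * 1.12 * x + (4.6 - 10 * R)) x := by
  have h : HasDerivAt (fun y => 0.12 * y ^ 3 + 1.12 * y ^ 2 + (4.6 - 10 * R) * y + (30 - 10 * R))
      (0.12 * (3 * x ^ 2) + 1.12 * (2 * x) + (4.6 - 10 * R)) x := by
    simpa using ((((hasDerivAt_pow 3 x).const_mul 0.12).add
      ((hasDerivAt_pow 2 x).const_mul 1.12)).add
      ((hasDerivAt_id x).const_mul (4.6 - 10 * R))).add_const (30 - 10 * R)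
  exact h.congr_deriv (by ring)

theorem fR_eq_of_double_root {R r : ℝ} (hroot : fR R r = 0) (hderiv : deriv (fR R) r = 0)
    (x : ℝ) : fR R x = (x - r) ^ 2 * (0.12 * (x + 2 * r) + 1.12) :=
  cubic_eq_sq_mul_of_double_root hroot ((hasDerivAt_fR R r).deriv ▸ hderiv) x

theorem fR_pos_of_double_root {R r x : ℝ} (hroot : fR R r = 0) (hderiv : deriv (fR R) r = 0)
    (hr : 0 ≤ r) (hx : 0 ≤ x) (hxr : x ≠ r) : 0 < fR R x := by
  rw [fR_eq_of_double_root hroot hderiv]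
  exact mul_pos (sq_pos_of_ne_zero (sub_ne_zero.mpr hxr)) (by linarith)

theorem double_root_is_unique_nonneg_root_general (Rc xc : ℝ)
    (hxc : 0 < xc)
    (hroot : fR Rc xc = 0) (hderiv : deriv (fR Rc) xc = 0) :
    (∀ x : ℝ, 0 ≤ x → x ≠ xc → 0 < fR Rc x) ∧
    (∀ x : ℝ, 0 ≤ x → fR Rc x = 0 → x = xc) ∧
    (∀ x : ℝ, fR Rc x = 0 → x ≠ xc → x < 0) := by
  have hpos : ∀ x : ℝ, 0 ≤ x → x ≠ xc → 0 < fR Rc x :=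
    fun x hx hne => fR_pos_of_double_root hroot hderiv hxc.le hx hne
  refine ⟨hpos, fun x hx hfx => ?_, fun x hfx hne => ?_⟩
  · by_contra hne
    exact (hpos x hx hne).ne' hfx
  · by_contra hx
    exact (hpos x (not_lt.mp hx) hne).ne' hfx

/-- If R_c ∈ (1.42, 1.43) and x_c > 0 give a double root of f_{R_c}, then f_{R_c}(x) > 0 for
every x ∈ [0,∞) with x ≠ x_c; in particular x_c is the unique nonnegative root and the third
real root of the cubic is negative. -/
theorem double_root_is_unique_nonneg_root (Rc xc : ℝ)
    (hRc : Rc ∈ Set.Ioo (1.42 : ℝ) 1.43) (hxc : 0 < xc)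
    (hroot : fR Rc xc = 0) (hderiv : deriv (fR Rc) xc = 0) :
    (∀ x : ℝ, 0 ≤ x → x ≠ xc → 0 < fR Rc x) ∧
    (∀ x : ℝ, 0 ≤ x → fR Rc x = 0 → x = xc) ∧
    (∀ x : ℝ, fR Rc x = 0 → x ≠ xc → x < 0) :=
  double_root_is_unique_nonneg_root_general Rc xc hxc hroot hderiv
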